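/- For integers m ≥ 0 and even j with 0 ≤ j ≤ 2m, the sum of squares of column j/2 of the symmetric Krawtchouk matrix of order m equals (−1)^{j/2} times the middle-row entry of the matrix of order 2m: ∑_{i=0}^m (Φ^m_{i, j/2})² = (−1)^{j/2} · Φ^{2m}_{m,j}. -/
import Mathlib

/-- Symmetric Krawtchouk values:
`Φ^N_{n,j} = ∑_k (-1)^k C(j,k) C(N-j, n-k)`, the coefficient of `z^n` in
`(1+z)^(N-j) (1-z)^j`. -/
def symKrawtchouk (N n j : ℕ) : ℤ :=
  ∑ k ∈ Finset.range (j + 1),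
    if k ≤ n then (-1 : ℤ) ^ k * (j.choose k) * ((N - j).choose (n - k)) else 0

open Polynomial Finset

lemma coeff_one_sub_X_pow' (q k : ℕ) :
    (((1 : ℤ[X]) - X) ^ q).coeff k = (-1 : ℤ) ^ k * q.choose k := by
  induction q generalizing k with
  | zero =>
    cases k with
    | zero => simp
    | succ k => simp [Polynomial.coeff_one]
  | succ q ih =>
    have h : ((1 : ℤ[X]) - X) ^ (q + 1) = (1 - X) ^ q - (1 - X) ^ q * X := by ring
    rw [h, coeff_sub]
    cases k with
    | zero => simp [ih]
    | succ k =>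
      rw [coeff_mul_X, ih, ih, Nat.choose_succ_succ']
      push_cast
      ring

lemma symKrawtchouk_eq_coeff (N n j : ℕ) :
    symKrawtchouk N n j = (((1 : ℤ[X]) - X) ^ j * (1 + X) ^ (N - j)).coeff n := by
  rw [coeff_mul, Finset.Nat.sum_antidiagonal_eq_sum_range_succ_mk]
  set M := max n j with hM
  have hs₁ : Finset.range (j + 1) ⊆ Finset.range (M + 1) := by
    intro x hx; simp only [Finset.mem_range] at *; omega
  have hs₂ : Finset.range (n + 1) ⊆ Finset.range (M + 1) := by
    intro x hx; simp only [Finset.mem_range] at *; omega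
  have h1 : symKrawtchouk N n j = ∑ k ∈ Finset.range (M + 1),
      (if k ≤ n then (-1 : ℤ) ^ k * (j.choose k) * ((N - j).choose (n - k)) else 0) := by
    rw [symKrawtchouk]
    refine Finset.sum_subset hs₁ fun x _ hx' => ?_
    simp only [Finset.mem_range] at hx'
    rw [Nat.choose_eq_zero_of_lt (by omega)]
    simp
  have h2 : (∑ k ∈ Finset.range (n + 1),
      (((1 : ℤ[X]) - X) ^ j).coeff k * (((1 : ℤ[X]) + X) ^ (N - j)).coeff (n - k)) =
      ∑ k ∈ Finset.range (M + 1),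
      (if k ≤ n then (-1 : ℤ) ^ k * (j.choose k) * ((N - j).choose (n - k)) else 0) := by
    rw [← Finset.sum_subset hs₂ (fun x _ hx' => by
      simp only [Finset.mem_range] at hx'; exact if_neg (by omega))]
    refine Finset.sum_congr rfl fun k hk => ?_
    simp only [Finset.mem_range] at hk
    rw [coeff_one_sub_X_pow', coeff_one_add_X_pow, if_pos (by omega), mul_assoc]
  rw [h1, h2]

lemma natDeg_one_add_X_pow (a : ℕ) : ((((1 : ℤ[X]) + X)) ^ a).natDegree ≤ a := by
  refine natDegree_pow_le.trans ?_
  have h : ((1 : ℤ[X]) + X).natDegree ≤ 1 := (natDegree_add_le _ _).trans (by simp)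
  calc a * ((1 : ℤ[X]) + X).natDegree ≤ a * 1 := Nat.mul_le_mul_left a h
    _ = a := mul_one a

lemma natDeg_one_sub_X_pow (q : ℕ) : ((((1 : ℤ[X]) - X)) ^ q).natDegree ≤ q := by
  refine natDegree_pow_le.trans ?_
  have h : ((1 : ℤ[X]) - X).natDegree ≤ 1 := (natDegree_sub_le _ _).trans (by simp)
  calc q * ((1 : ℤ[X]) - X).natDegree ≤ q * 1 := Nat.mul_le_mul_left q h
    _ = q := mul_one q

lemma reflect_one_add_X_pow (a : ℕ) :
    reflect a (((1 : ℤ[X]) + X) ^ a) = (1 + X) ^ a := by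
  induction a with
  | zero => simp
  | succ a ih =>
    rw [pow_succ,
      reflect_mul _ _ (F := a) (G := 1)
        (natDeg_one_add_X_pow a) ((natDegree_add_le _ _).trans (by simp)),
      ih, reflect_add, reflect_one, reflect_one_X]
    ring

lemma reflect_one_sub_X_pow (q : ℕ) :
    reflect q (((1 : ℤ[X]) - X) ^ q) = (-1 : ℤ[X]) ^ q * (1 - X) ^ q := by
  induction q with
  | zero => simp
  | succ q ih =>
    rw [pow_succ,
      reflect_mul _ _ (F := q) (G := 1)
        (natDeg_one_sub_X_pow q) ((natDegree_sub_le _ _).trans (by simp)),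
      ih, reflect_sub, reflect_one, reflect_one_X]
    ring

lemma reflect_special (q a : ℕ) :
    reflect (q + a) (((1 : ℤ[X]) - X) ^ q * (1 + X) ^ a) =
      (-1 : ℤ[X]) ^ q * ((1 - X) ^ q * (1 + X) ^ a) := by
  rw [reflect_mul _ _ (F := q) (G := a)
      (natDeg_one_sub_X_pow q) (natDeg_one_add_X_pow a),
    reflect_one_sub_X_pow, reflect_one_add_X_pow]
  ring

/-- The sum of squares of column `j/2` of `Φ^m` equals `(−1)^{j/2}` times the
middle-row entry `Φ^{2m}_{m,j}`, for even `j ≤ 2m`. -/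
theorem symKrawtchouk_column_sq_sum_middle (m j : ℕ) (hj : j ≤ 2 * m) (hje : Even j) :
    ∑ i ∈ Finset.range (m + 1), (symKrawtchouk m i (j / 2)) ^ 2 =
      (-1 : ℤ) ^ (j / 2) * symKrawtchouk (2 * m) m j := by
  obtain ⟨r, hr⟩ := hje
  set q := j / 2 with hq
  have hjq : j = 2 * q := by omega
  have hqm : q ≤ m := by omega
  set P : ℤ[X] := ((1 : ℤ[X]) - X) ^ q * (1 + X) ^ (m - q) with hP
  have hrefl : reflect m P = (-1 : ℤ[X]) ^ q * P := by
    have h := reflect_special q (m - q)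
    rwa [show q + (m - q) = m by omega] at h
  have hpal : ∀ i, i ≤ m → P.coeff (m - i) = (-1 : ℤ) ^ q * P.coeff i := by
    intro i hi
    have h := congrArg (fun p => Polynomial.coeff p i) hrefl
    simp only [coeff_reflect, revAt_le hi] at h
    rw [h, show ((-1 : ℤ[X]) ^ q) = Polynomial.C ((-1 : ℤ) ^ q) by simp, coeff_C_mul]
  have hcoeff : ∀ i, symKrawtchouk m i q = P.coeff i := fun i =>
    symKrawtchouk_eq_coeff m i q
  have hP2 : P * P = ((1 : ℤ[X]) - X) ^ j * (1 + X) ^ (2 * m - j) := by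
    rw [hP, show (((1:ℤ[X]) - X) ^ q * (1 + X) ^ (m - q)) * ((1 - X) ^ q * (1 + X) ^ (m - q))
        = (1 - X) ^ (q + q) * (1 + X) ^ ((m - q) + (m - q)) by ring,
      show q + q = j by omega, show (m - q) + (m - q) = 2 * m - j by omega]
  have hmid : symKrawtchouk (2 * m) m j = (P * P).coeff m := by
    rw [hP2, symKrawtchouk_eq_coeff]
  have hconv : (P * P).coeff m = ∑ i ∈ Finset.range (m + 1), P.coeff i * P.coeff (m - i) := by
    rw [coeff_mul, Finset.Nat.sum_antidiagonal_eq_sum_range_succ_mk]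
  rw [hmid, hconv, Finset.mul_sum]
  refine Finset.sum_congr rfl fun i hi => ?_
  simp only [Finset.mem_range] at hi
  rw [hcoeff, hpal i (by omega)]
  have hsq : ((-1 : ℤ) ^ q) ^ 2 = 1 := by
    rw [← pow_mul, mul_comm, pow_mul]; norm_num
  nlinarith [hsq, sq_nonneg (P.coeff i)]
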